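/- arXiv:1302.4129 — 2 statements merged into one kernel-verified Lean document; each statement's English description precedes it below -/
import Mathlib

section
/- (Butterfly access count) Let k ≥ 2 be an integer and j ∈ {0,…,k−1}. Then the set {i ⊕ (2^j − 1) : i ∈ {0,…,2^{k−1}−1}, i(j) ≠ i(j−1)} is contained in {0,…,2^{k−1}−1} and has exactly 2^{k−2} elements. -/
/-- The `j`-th bit of `i` (`j ≥ 0`). -/
def bitp (i j : ℕ) : Bool := i.testBit j

/-- The `(j-1)`-th bit of `i`, with the convention that the bit at position `-1` is `0`. -/
def bitm (i j : ℕ) : Bool := if j = 0 then false else i.testBit (j - 1)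

/-- `i` is dark in column `j` iff `i(j) = i(j-1)`. -/
def dark (i j : ℕ) : Prop := bitp i j = bitm i j

instance (i j : ℕ) : Decidable (dark i j) := by unfold dark; infer_instance

/-- `ℓ_{i,j} = i ⊕ (2^j - 1)`. -/
def ell (i j : ℕ) : ℕ := i ^^^ (2 ^ j - 1)

/-- The set `B_{i,j}`. -/
def Bset (k i j : ℕ) : Finset (ℕ × ℕ) :=
  if dark i j then
    ((Finset.range k).filter
        (fun j' : ℕ => ((j : ℤ) - (j' : ℤ)) % (k : ℤ) ≤ ((k / 2 : ℕ) : ℤ))).image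
      (fun j' => (i, j'))
  else {(i, j)}

/-- The butterfly support set `B_i = ⋃_{j ∈ [k]} B_{ℓ_{i,j}, j}`. -/
def Bline (k i : ℕ) : Finset (ℕ × ℕ) :=
  (Finset.range k).biUnion (fun j => Bset k (ell i j) j)

/-- Horizontal parity `h_i(a)`. -/
def hpar (k : ℕ) (a : ℕ → ℕ → ZMod 2) (i : ℕ) : ZMod 2 :=
  ∑ j ∈ Finset.range k, a i j

/-- Butterfly parity `b_i(a)`. -/
def bpar (k : ℕ) (a : ℕ → ℕ → ZMod 2) (i : ℕ) : ZMod 2 :=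
  ∑ p ∈ Bline k i, a p.1 p.2

/-!
`ℓ(·, j)` is an involution that keeps numbers below `2^(k-1)` (as `2^j - 1 < 2^(k-1)`), so the set
has as many elements as there are non-dark `i < 2^(k-1)`. Flipping bit `j - 1` exchanges dark and
non-dark numbers, so exactly half of the `2^(k-1)` numbers are non-dark.
-/

/-- For `j = 0` the truncated subtraction gives `2 ^ 0`: bit `0` is flipped, which is exactly the
bit deciding darkness in column `0`. -/
theorem dark_xor_two_pow_pred_iff (i j : ℕ) : dark (i ^^^ 2 ^ (j - 1)) j ↔ ¬ dark i j := by
  unfold dark bitp bitm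
  rcases Nat.eq_zero_or_pos j with rfl | hj
  · simp
    omega
  · have hne : j - 1 ≠ j := by omega
    simp only [Nat.testBit_xor, Nat.testBit_two_pow_self, Nat.testBit_two_pow_of_ne hne,
      hj.ne', if_false, Bool.xor_true, Bool.xor_false]
    cases i.testBit j <;> cases i.testBit (j - 1) <;> decide

theorem ell_involutive (j : ℕ) : Function.Involutive (ell · j) :=
  xor_left_involutive _

theorem ell_lt_two_pow {i j n : ℕ} (hi : i < 2 ^ n) (hj : j ≤ n) : ell i j < 2 ^ n :=
  Nat.xor_lt_two_pow hi <| (Nat.sub_lt (Nat.two_pow_pos j) one_pos).trans_le <|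
    Nat.pow_le_pow_right two_pos hj

theorem card_filter_not_dark_eq_card_filter_dark {n j : ℕ} (hj : j - 1 < n) :
    ((Finset.range (2 ^ n)).filter (fun i => ¬ dark i j)).card =
      ((Finset.range (2 ^ n)).filter (fun i => dark i j)).card := by
  have hflip : ∀ {i}, i < 2 ^ n → i ^^^ 2 ^ (j - 1) < 2 ^ n :=
    (Nat.xor_lt_two_pow · (Nat.pow_lt_pow_right one_lt_two hj))
  apply Finset.card_nbij' (· ^^^ 2 ^ (j - 1)) (· ^^^ 2 ^ (j - 1))
  · intro i hi
    simp only [Finset.coe_filter, Finset.mem_range, Set.mem_ofPred_eq] at hi ⊢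
    exact ⟨hflip hi.1, (dark_xor_two_pow_pred_iff i j).2 hi.2⟩
  · intro i hi
    simp only [Finset.coe_filter, Finset.mem_range, Set.mem_ofPred_eq] at hi ⊢
    exact ⟨hflip hi.1, (dark_xor_two_pow_pred_iff i j).not.2 (not_not.2 hi.2)⟩
  · exact fun i _ => xor_cancel_right i _
  · exact fun i _ => xor_cancel_right i _

theorem card_filter_not_dark {n j : ℕ} (hj : j - 1 < n) :
    ((Finset.range (2 ^ n)).filter (fun i => ¬ dark i j)).card = 2 ^ (n - 1) := by
  have hsplit := Finset.card_filter_add_card_filter_not (s := Finset.range (2 ^ n))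
    (fun i => dark i j)
  rw [Finset.card_range, ← card_filter_not_dark_eq_card_filter_dark hj] at hsplit
  have : 2 ^ n = 2 * 2 ^ (n - 1) := by rw [← pow_succ']; congr 1; omega
  omega

/-- Butterfly access count: the set `{i ⊕ (2^j - 1) : i < 2^(k-1), i(j) ≠ i(j-1)}` is
contained in `{0,…,2^(k-1)-1}` and has exactly `2^(k-2)` elements. -/
theorem butterfly_access_count (k : ℕ) (hk : 2 ≤ k) (j : ℕ) (hj : j < k) :
    (((Finset.range (2 ^ (k - 1))).filter (fun i => ¬ dark i j)).image (fun i => ell i j))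
        ⊆ Finset.range (2 ^ (k - 1)) ∧
    (((Finset.range (2 ^ (k - 1))).filter (fun i => ¬ dark i j)).image
        (fun i => ell i j)).card = 2 ^ (k - 2) := by
  constructor
  · intro x hx
    simp only [Finset.mem_image, Finset.mem_filter, Finset.mem_range] at hx ⊢
    obtain ⟨i, ⟨hi, -⟩, rfl⟩ := hx
    exact ell_lt_two_pow (n := k - 1) hi (by omega)
  · rw [Finset.card_image_of_injective _ (ell_involutive j).injective,
      card_filter_not_dark (by omega), Nat.sub_sub]
end

section
/- (Worst-case rows attain the maximum butterfly update count) Let k ≥ 3 be odd. For every i ∈ {0,…,2^{k−1}−1} and j ∈ {0,…,k−1}, |{m ∈ {0,…,2^{k−1}−1} : (i,j) ∈ B_m}| ≤ ⌊k/2⌋ + 1, and for the all-zero row i = 0 this bound is attained: for every j ∈ {0,…,k−1}, |{m ∈ {0,…,2^{k−1}−1} : (0,j) ∈ B_m}| = ⌊k/2⌋ + 1. -/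
lemma ell_ell (m j : ℕ) : ell (ell m j) j = m := by
  simp [ell, Nat.xor_assoc]

lemma ell_inj (i : ℕ) : Function.Injective (ell i) := by
  intro a b hab
  have h1 : 2 ^ a - 1 = 2 ^ b - 1 := by
    have h2 := congrArg (fun x => i ^^^ x) hab
    simpa [ell, ← Nat.xor_assoc] using h2
  have ha := Nat.one_le_two_pow (n := a)
  have hb := Nat.one_le_two_pow (n := b)
  exact Nat.pow_right_injective (le_refl 2) (show 2 ^ a = 2 ^ b by omega)

lemma mem_Bset_fst {k i j : ℕ} {p : ℕ × ℕ} (h : p ∈ Bset k i j) : p.1 = i := by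
  unfold Bset at h
  split at h
  · simp only [Finset.mem_image] at h
    obtain ⟨a, _, ha⟩ := h
    rw [← ha]
  · simp only [Finset.mem_singleton] at h
    rw [h]

lemma mem_Bset_iff {k i j j' : ℕ} :
    (i, j') ∈ Bset k i j ↔
      (dark i j ∧ j' < k ∧ ((j : ℤ) - (j' : ℤ)) % (k : ℤ) ≤ ((k / 2 : ℕ) : ℤ)) ∨
      (¬ dark i j ∧ j' = j) := by
  unfold Bset
  split <;>
    simp_all [Finset.mem_image, Finset.mem_filter, Finset.mem_range, Prod.ext_iff]

lemma filter_eq {k : ℕ} {i j : ℕ} (hi : i < 2 ^ (k - 1)) :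
    (Finset.range (2 ^ (k - 1))).filter (fun m => (i, j) ∈ Bline k m)
      = ((Finset.range k).filter (fun j0 => (i, j) ∈ Bset k i j0)).image (fun j0 => ell i j0) := by
  ext m
  simp only [Finset.mem_filter, Finset.mem_range, Finset.mem_image, Bline, Finset.mem_biUnion]
  constructor
  · rintro ⟨hm, j0, hj0, hB⟩
    have hfst : i = ell m j0 := mem_Bset_fst hB
    have hmell : m = ell i j0 := by rw [hfst, ell_ell]
    rw [← hfst] at hB
    exact ⟨j0, ⟨hj0, hB⟩, hmell.symm⟩
  · rintro ⟨j0, ⟨hj0, hB⟩, hm⟩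
    refine ⟨?_, j0, hj0, ?_⟩
    · rw [← hm]
      exact Nat.xor_lt_two_pow hi (by
        have h2 : 2 ^ j0 ≤ 2 ^ (k - 1) := Nat.pow_le_pow_right (by norm_num) (by omega)
        have := Nat.one_le_two_pow (n := j0)
        omega)
    · rw [← hm, ell_ell]
      exact hB

lemma window_card {k : ℕ} (hk : 1 ≤ k) {j : ℕ} (hj : j < k) :
    ((Finset.range k).filter
        (fun j0 : ℕ => ((j0 : ℤ) - (j : ℤ)) % (k : ℤ) ≤ ((k / 2 : ℕ) : ℤ))).card
      = k / 2 + 1 := by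
  have hkz : (0 : ℤ) < (k : ℤ) := by exact_mod_cast hk
  have hhalf : k / 2 < k := Nat.div_lt_self (by omega) (by norm_num)
  have hset : (Finset.range k).filter
        (fun j0 : ℕ => ((j0 : ℤ) - (j : ℤ)) % (k : ℤ) ≤ ((k / 2 : ℕ) : ℤ))
      = (Finset.range (k / 2 + 1)).image (fun r => (j + r) % k) := by
    ext j0
    simp only [Finset.mem_filter, Finset.mem_range, Finset.mem_image]
    constructor
    · rintro ⟨h1, h2⟩
      set d : ℤ := ((j0 : ℤ) - (j : ℤ)) % (k : ℤ) with hd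
      have hd0 : 0 ≤ d := Int.emod_nonneg _ (by omega)
      refine ⟨d.toNat, by omega, ?_⟩
      have hmod : ((j : ℤ) + d) % (k : ℤ) = (j0 : ℤ) := by
        rw [hd, Int.add_emod, Int.emod_emod_of_dvd _ dvd_rfl, ← Int.add_emod]
        have h3 : (j : ℤ) + ((j0 : ℤ) - (j : ℤ)) = (j0 : ℤ) := by ring
        rw [h3, Int.emod_eq_of_lt (by omega) (by exact_mod_cast h1)]
      have h4 : (((j + d.toNat) % k : ℕ) : ℤ) = (j0 : ℤ) := by
        push_cast [Int.toNat_of_nonneg hd0]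
        exact hmod
      exact_mod_cast h4
    · rintro ⟨r, hr, hrj⟩
      subst hrj
      refine ⟨Nat.mod_lt _ (by omega), ?_⟩
      have hrk : (r : ℤ) < (k : ℤ) := by exact_mod_cast lt_of_lt_of_le hr (by omega)
      have hr2 : (r : ℤ) % (k : ℤ) = (r : ℤ) :=
        Int.emod_eq_of_lt (by positivity) hrk
      have h5 : ((((j + r) % k : ℕ) : ℤ) - (j : ℤ)) % (k : ℤ) = (r : ℤ) := by
        push_cast
        rw [Int.sub_emod, Int.emod_emod_of_dvd _ dvd_rfl, ← Int.sub_emod]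
        have h6 : ((j : ℤ) + (r : ℤ) - (j : ℤ)) = (r : ℤ) := by ring
        rw [h6, hr2]
      rw [h5]
      exact_mod_cast Nat.le_of_lt_succ hr
  rw [hset, Finset.card_image_of_injOn, Finset.card_range]
  intro a ha b hb hab
  simp only [Finset.coe_range, Set.mem_Iio] at ha hb
  have h1 : a ≡ b [MOD k] := Nat.ModEq.add_left_cancel' j hab
  have h2 : a % k = b % k := h1
  rw [Nat.mod_eq_of_lt (by omega), Nat.mod_eq_of_lt (by omega)] at h2
  exact h2

/-- Worst-case rows attain the maximum butterfly update count: the number of butterfly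
elements containing `(i,j)` is at most `⌊k/2⌋ + 1`, with equality for the all-zero row. -/
theorem worst_case_butterfly_update_count (k : ℕ) (hk : 3 ≤ k) (hodd : Odd k) :
    (∀ i < 2 ^ (k - 1), ∀ j < k,
      ((Finset.range (2 ^ (k - 1))).filter (fun m => (i, j) ∈ Bline k m)).card
        ≤ k / 2 + 1) ∧
    (∀ j < k,
      ((Finset.range (2 ^ (k - 1))).filter (fun m => (0, j) ∈ Bline k m)).card
        = k / 2 + 1) := by
  have hk1 : 1 ≤ k := by omega
  constructor
  · intro i hi j hj
    rw [filter_eq hi, Finset.card_image_of_injective _ (ell_inj i)]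
    have hsub : (Finset.range k).filter (fun j0 => (i, j) ∈ Bset k i j0) ⊆
        (Finset.range k).filter
          (fun j0 : ℕ => ((j0 : ℤ) - (j : ℤ)) % (k : ℤ) ≤ ((k / 2 : ℕ) : ℤ)) := by
      intro j0 hj0
      simp only [Finset.mem_filter, Finset.mem_range] at hj0 ⊢
      obtain ⟨h1, h2⟩ := hj0
      rcases mem_Bset_iff.mp h2 with ⟨_, _, h3⟩ | ⟨_, h3⟩
      · exact ⟨h1, h3⟩
      · refine ⟨h1, ?_⟩
        subst h3
        simp
        positivity
    calc ((Finset.range k).filter (fun j0 => (i, j) ∈ Bset k i j0)).card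
        ≤ _ := Finset.card_le_card hsub
      _ = k / 2 + 1 := window_card hk1 hj
  · intro j hj
    have h0 : (0 : ℕ) < 2 ^ (k - 1) := by positivity
    rw [filter_eq h0, Finset.card_image_of_injective _ (ell_inj 0)]
    have heq : (Finset.range k).filter (fun j0 => ((0 : ℕ), j) ∈ Bset k 0 j0)
        = (Finset.range k).filter
          (fun j0 : ℕ => ((j0 : ℤ) - (j : ℤ)) % (k : ℤ) ≤ ((k / 2 : ℕ) : ℤ)) := by
      apply Finset.filter_congr
      intro j0 _
      have hdark : dark 0 j0 := by
        simp [dark, bitp, bitm, Nat.zero_testBit]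
      rw [mem_Bset_iff]
      simp [hdark, hj]
    rw [heq, window_card hk1 hj]
end
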